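/- arXiv:2509.07174 — 2 statements merged into one kernel-verified Lean document; each statement's English description precedes it below -/
import Mathlib

section
/- Menger's theorem: Let G be a finite simple graph, S, T ⊆ V(G), and k ≥ 0. Then either there exist k+1 pairwise vertex-disjoint paths each having one end in S and the other end in T, or there exists a set X ⊆ V(G) with |X| ≤ k such that every path from S to T contains a vertex of X. -/
namespace MengerAux
variable {V : Type*} [DecidableEq V]

/-- Deduplicate a walk into a path with the same endpoints. -/
def dd : List V → List V
  | [] => []
  | a :: l =>
    if a ∈ l then dd (l.dropWhile (fun x => decide (x ≠ a)))
    else a :: dd l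
termination_by l => l.length
decreasing_by
  all_goals simp only [List.length_cons]
  all_goals first
    | exact Nat.lt_succ_of_le (List.IsSuffix.length_le (List.dropWhile_suffix _))
    | omega

lemma dropWhile_ne_nil {a : V} {l : List V} (h : a ∈ l) :
    l.dropWhile (fun x => decide (x ≠ a)) ≠ [] := by
  simp only [ne_eq, List.dropWhile_eq_nil_iff]
  push_neg
  exact ⟨a, h, by simp⟩

lemma head_dropWhile_ne {a : V} {l : List V} (h : a ∈ l) :
    (l.dropWhile (fun x => decide (x ≠ a))).head (dropWhile_ne_nil h) = a := by
  have := List.head_dropWhile_not (fun x => decide (x ≠ a)) (dropWhile_ne_nil h)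
  simpa using this

lemma dd_subset : ∀ l : List V, dd l ⊆ l
  | [] => by simp [dd]
  | a :: l => by
    rw [dd]
    split
    · exact fun x hx =>
        List.mem_cons_of_mem a ((List.dropWhile_suffix _).subset (dd_subset _ hx))
    · intro x hx
      rcases List.mem_cons.1 hx with h | h
      · simp [h]
      · exact List.mem_cons_of_mem a (dd_subset _ h)
termination_by l => l.length
decreasing_by
  all_goals simp only [List.length_cons]
  all_goals first
    | exact Nat.lt_succ_of_le (List.IsSuffix.length_le (List.dropWhile_suffix _))
    | omega


lemma dd_ne_nil : ∀ l : List V, l ≠ [] → dd l ≠ []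
  | [], h => absurd rfl h
  | a :: l, _ => by
    rw [dd]
    split
    · rename_i hmem
      exact dd_ne_nil _ (dropWhile_ne_nil hmem)
    · simp
termination_by l => l.length
decreasing_by
  all_goals simp only [List.length_cons]
  all_goals first
    | exact Nat.lt_succ_of_le (List.IsSuffix.length_le (List.dropWhile_suffix _))
    | omega

lemma dd_head? : ∀ l : List V, (dd l).head? = l.head?
  | [] => by simp [dd]
  | a :: l => by
    rw [dd]
    split
    · rename_i hmem
      rw [dd_head? _]
      have h1 := dropWhile_ne_nil hmem
      rw [List.head?_eq_head h1, head_dropWhile_ne hmem, List.head?_cons]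
    · simp
termination_by l => l.length
decreasing_by
  all_goals simp only [List.length_cons]
  all_goals first
    | exact Nat.lt_succ_of_le (List.IsSuffix.length_le (List.dropWhile_suffix _))
    | omega

lemma dd_getLast? : ∀ l : List V, l ≠ [] → (dd l).getLast? = l.getLast?
  | [], h => absurd rfl h
  | a :: l, _ => by
    rw [dd]
    split
    · rename_i hmem
      have h1 := dropWhile_ne_nil hmem
      rw [dd_getLast? _ h1]
      obtain ⟨t, ht⟩ := List.dropWhile_suffix (l := l) (fun x => decide (x ≠ a))
      have hl : l ≠ [] := by rintro rfl; exact absurd hmem (by simp)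
      calc (l.dropWhile (fun x => decide (x ≠ a))).getLast?
          = (t ++ l.dropWhile (fun x => decide (x ≠ a))).getLast? :=
            (List.getLast?_append_of_ne_nil _ h1).symm
        _ = l.getLast? := by rw [ht]
        _ = (a :: l).getLast? := by
            rw [List.getLast?_eq_getLast_of_ne_nil hl,
              List.getLast?_eq_getLast_of_ne_nil (List.cons_ne_nil a l),
              List.getLast_cons hl]
    · rcases eq_or_ne l [] with rfl | hl
      · simp [dd]
      · have h2 : dd l ≠ [] := dd_ne_nil l hl
        calc (a :: dd l).getLast? = ([a] ++ dd l).getLast? := by simp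
          _ = (dd l).getLast? := List.getLast?_append_of_ne_nil _ h2
          _ = l.getLast? := dd_getLast? _ hl
          _ = ([a] ++ l).getLast? := (List.getLast?_append_of_ne_nil _ hl).symm
          _ = (a :: l).getLast? := by simp
termination_by l => l.length
decreasing_by
  all_goals simp only [List.length_cons]
  all_goals first
    | exact Nat.lt_succ_of_le (List.IsSuffix.length_le (List.dropWhile_suffix _))
    | omega

lemma dd_nodup : ∀ l : List V, (dd l).Nodup
  | [] => by simp [dd]
  | a :: l => by
    rw [dd]
    split
    · exact dd_nodup _
    · rename_i hmem
      exact List.nodup_cons.2 ⟨fun hx => hmem (dd_subset _ hx), dd_nodup _⟩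
termination_by l => l.length
decreasing_by
  all_goals simp only [List.length_cons]
  all_goals first
    | exact Nat.lt_succ_of_le (List.IsSuffix.length_le (List.dropWhile_suffix _))
    | omega

lemma dd_chain' {r : V → V → Prop} : ∀ l : List V, l.Chain' r → (dd l).Chain' r
  | [], _ => by simp [dd, List.Chain']
  | a :: l, hc => by
    rw [dd]
    split
    · rename_i hmem
      exact dd_chain' _ ((hc.tail).suffix (List.dropWhile_suffix _))
    · rename_i hmem
      rcases eq_or_ne l [] with rfl | hl
      · simp [dd, List.Chain']
      · have h2 : dd l ≠ [] := dd_ne_nil l hl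
        rw [List.Chain', List.isChain_cons]
        refine ⟨?_, dd_chain' _ hc.tail⟩
        intro b hb
        rw [dd_head?, List.head?_eq_head hl] at hb
        simp only [Option.mem_def, Option.some.injEq] at hb
        subst hb
        exact (List.isChain_cons.1 hc).1 _ (by rw [List.head?_eq_head hl]; rfl)
termination_by l => l.length
decreasing_by
  all_goals simp only [List.length_cons]
  all_goals first
    | exact Nat.lt_succ_of_le (List.IsSuffix.length_le (List.dropWhile_suffix _))
    | omega

variable {r : V → V → Prop} {S T : Set V}

/-- `X` separates `S` from `T` in the digraph `r`: every r-path from S to T meets X. -/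
def Sep (r : V → V → Prop) (S T : Set V) (X : Finset V) : Prop :=
  ∀ l : List V, l.Chain' r → l.Nodup → (∃ a ∈ S, l.head? = some a) →
    (∃ b ∈ T, l.getLast? = some b) → ∃ x ∈ X, x ∈ l

/-- `l` is an S–T path in `r`. -/
def PathB (r : V → V → Prop) (S T : Set V) (l : List V) : Prop :=
  l.Chain' r ∧ l.Nodup ∧ (∃ a ∈ S, l.head? = some a) ∧ (∃ b ∈ T, l.getLast? = some b)

lemma mem_of_getLast? {l : List V} {a : V} (h : l.getLast? = some a) : a ∈ l := by
  have := List.mem_getLast?_eq_getLast (l := l) (x := a) h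
  obtain ⟨h1, rfl⟩ := this
  exact List.getLast_mem h1

lemma Sep.walk (hX : Sep r S T X) {l : List V} (hc : l.Chain' r)
    (hh : ∃ a ∈ S, l.head? = some a) (hl : ∃ b ∈ T, l.getLast? = some b) :
    ∃ x ∈ X, x ∈ l := by
  have hne : l ≠ [] := by rintro rfl; obtain ⟨a, -, ha⟩ := hh; simp at ha
  obtain ⟨x, hx, hxl⟩ := hX (dd l) (dd_chain' l hc) (dd_nodup l)
    (by rwa [dd_head?]) (by rwa [dd_getLast? l hne])
  exact ⟨x, hx, dd_subset l hxl⟩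

section arc
variable {u v : V}

/-- The relation `r` with the arc `(u,v)` removed. -/
def del (r : V → V → Prop) (u v : V) : V → V → Prop :=
  fun a b => r a b ∧ ¬(a = u ∧ b = v)

lemma del_le {a b : V} (h : del r u v a b) : r a b := h.1

lemma chain'_del_or : ∀ l : List V, l.Chain' r →
    l.Chain' (del r u v) ∨ ∃ l₁ l₂ : List V, l = l₁ ++ u :: v :: l₂
  | [], _ => Or.inl (by simp [List.Chain'])
  | [a], _ => Or.inl (by simp [List.Chain'])
  | a :: b :: t, hc => by
    rw [List.Chain', List.isChain_cons_cons] at hc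
    by_cases hab : a = u ∧ b = v
    · exact Or.inr ⟨[], t, by simp [hab.1, hab.2]⟩
    · rcases chain'_del_or (b :: t) hc.2 with h | ⟨l₁, l₂, he⟩
      · exact Or.inl (List.isChain_cons_cons.2 ⟨⟨hc.1, hab⟩, h⟩)
      · exact Or.inr ⟨a :: l₁, l₂, by rw [List.cons_append, ← he]⟩

/-- A nodup r-chain ending in `u` (with `u` occurring only at the end) is a `del`-chain. -/
lemma chain'_del_of_getLast_u {l : List V} (hc : l.Chain' r) (hnd : l.Nodup)
    (hlast : l.getLast? = some u) : l.Chain' (del r u v) := by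
  rcases chain'_del_or (u := u) (v := v) l hc with h | ⟨l₁, l₂, rfl⟩
  · exact h
  · exfalso
    have h1 : (l₁ ++ u :: v :: l₂).getLast? = (v :: l₂).getLast? := by
      rw [List.getLast?_append_of_ne_nil _ (by simp)]
      rw [show u :: v :: l₂ = [u] ++ v :: l₂ by simp,
        List.getLast?_append_of_ne_nil _ (by simp)]
    rw [hlast] at h1
    have h2 : u ∈ v :: l₂ := mem_of_getLast? h1.symm
    have h3 : (u :: v :: l₂).Nodup := (List.nodup_append.1 hnd).2.1
    rw [List.nodup_cons] at h3
    exact h3.1 h2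

/-- A nodup r-chain starting at `v` (occurring only at the start) is a `del`-chain. -/
lemma chain'_del_of_head_v (huv : u ≠ v) {l : List V} (hc : l.Chain' r) (hnd : l.Nodup)
    (hhead : l.head? = some v) : l.Chain' (del r u v) := by
  rcases chain'_del_or (u := u) (v := v) l hc with h | ⟨l₁, l₂, rfl⟩
  · exact h
  · exfalso
    have hv : v ∈ l₁ ++ u :: v :: l₂ := by simp
    have hvh : (l₁ ++ u :: v :: l₂).head? = some v := hhead
    cases l₁ with
    | nil =>
      simp only [List.nil_append, List.head?_cons, Option.some.injEq] at hvh
      exact huv hvh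
    | cons c l₁ =>
      simp only [List.cons_append, List.head?_cons, Option.some.injEq] at hvh
      have hnd' : (c :: (l₁ ++ u :: v :: l₂)).Nodup := hnd
      rw [List.nodup_cons] at hnd'
      exact hnd'.1 (by rw [hvh]; simp)

end arc
section trim
variable {W : Finset V}

/-- Prefix of `l` up to (and including) the first element lying in `W`. -/
def pu (W : Finset V) : List V → List V
  | [] => []
  | a :: l => if a ∈ W then [a] else a :: pu W l

lemma pu_prefix (W : Finset V) : ∀ l : List V, pu W l <+: l
  | [] => by simp [pu]
  | a :: l => by
    rw [pu]
    split
    · exact ⟨l, by simp⟩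
    · obtain ⟨t, ht⟩ := pu_prefix W l
      exact ⟨t, by rw [List.cons_append, ht]⟩

lemma pu_head? (W : Finset V) : ∀ l : List V, (pu W l).head? = l.head?
  | [] => by simp [pu]
  | a :: l => by rw [pu]; split <;> simp

lemma pu_last_mem (W : Finset V) : ∀ l : List V, (∃ w ∈ l, w ∈ W) →
    ∃ w ∈ W, (pu W l).getLast? = some w
  | [], h => by simp at h
  | a :: l, h => by
    rw [pu]
    split
    · exact ⟨a, by assumption, by simp⟩
    · rename_i ha
      obtain ⟨w, hwl, hwW⟩ := h
      have hwl' : w ∈ l := by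
        rcases List.mem_cons.1 hwl with rfl | h'
        · exact absurd hwW ha
        · exact h'
      obtain ⟨w', hw'W, hw'⟩ := pu_last_mem W l ⟨w, hwl', hwW⟩
      have hne : pu W l ≠ [] := by rintro he; rw [he] at hw'; simp at hw'
      refine ⟨w', hw'W, ?_⟩
      rw [show a :: pu W l = [a] ++ pu W l by simp,
        List.getLast?_append_of_ne_nil _ hne, hw']

lemma pu_mem_W (W : Finset V) : ∀ l : List V, ∀ x ∈ pu W l, x ∈ W →
    (pu W l).getLast? = some x
  | [], x, hx, _ => by simp [pu] at hx
  | a :: l, x, hx, hxW => by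
    rw [pu] at hx ⊢
    split at hx <;> rename_i ha
    · rw [if_pos ha]
      simp at hx
      simp [hx]
    · rw [if_neg ha]
      rcases List.mem_cons.1 hx with rfl | hx'
      · exact absurd hxW ha
      · have := pu_mem_W W l x hx' hxW
        have hne : pu W l ≠ [] := by rintro he; rw [he] at hx'; simp at hx'
        rw [show a :: pu W l = [a] ++ pu W l by simp,
          List.getLast?_append_of_ne_nil _ hne, this]

/-- Suffix of `l` from the last element lying in `W`. -/
def su (W : Finset V) (l : List V) : List V := (pu W l.reverse).reverse

lemma su_suffix (W : Finset V) (l : List V) : su W l <:+ l := by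
  obtain ⟨t, ht⟩ := pu_prefix W l.reverse
  refine ⟨t.reverse, ?_⟩
  have := congrArg List.reverse ht
  simpa [su] using this

lemma su_getLast? (W : Finset V) (l : List V) : (su W l).getLast? = l.getLast? := by
  rw [su, List.getLast?_reverse, pu_head?, List.head?_reverse]

lemma su_head_mem (W : Finset V) (l : List V) (h : ∃ w ∈ l, w ∈ W) :
    ∃ w ∈ W, (su W l).head? = some w := by
  obtain ⟨w, hwW, hw⟩ := pu_last_mem W l.reverse (by obtain ⟨w, h1, h2⟩ := h; exact ⟨w, by simpa using h1, h2⟩)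
  exact ⟨w, hwW, by rw [su, List.head?_reverse, hw]⟩

lemma su_mem_W (W : Finset V) (l : List V) (x : V) (hx : x ∈ su W l) (hxW : x ∈ W) :
    (su W l).head? = some x := by
  rw [su, List.head?_reverse]
  exact pu_mem_W W l.reverse x (by simpa [su] using hx) hxW

end trim

/-- Gluing an S–M path with an M–T path overlapping exactly at the join vertex. -/
lemma glue_path {r' : V → V → Prop} {A B : List V} (hA : A ≠ []) (hB : B ≠ [])
    (hcA : A.Chain' r') (hcB : B.Chain' r') (hndA : A.Nodup) (hndB : B.Nodup)
    (hlink : A.getLast? = B.head?)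
    (hdisj : ∀ z, z ∈ A → z ∈ B → B.head? = some z) :
    (A ++ B.tail).Chain' r' ∧ (A ++ B.tail).Nodup ∧
    (A ++ B.tail).head? = A.head? ∧ (A ++ B.tail).getLast? = B.getLast? := by
  obtain ⟨b, bt, rfl⟩ := List.exists_cons_of_ne_nil hB
  have hlink' : A.getLast? = some b := by rw [hlink]; simp
  refine ⟨?_, ?_, ?_, ?_⟩
  · refine List.isChain_append.2 ⟨hcA, hcB.tail, fun x hx y hy => ?_⟩
    have hx' : x = b := by
      rw [Option.mem_def, hlink'] at hx
      exact (Option.some.injEq _ _ ▸ hx).symm ▸ rfl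
    subst hx'
    exact (List.isChain_cons.1 hcB).1 y hy
  · rw [List.nodup_append]
    refine ⟨hndA, (List.nodup_cons.1 hndB).2, fun z hzA z' hzB hzz => ?_⟩
    subst hzz
    have := hdisj z hzA (List.mem_cons_of_mem b hzB)
    simp only [List.head?_cons, Option.some.injEq] at this
    exact (List.nodup_cons.1 hndB).1 (this ▸ hzB)
  · obtain ⟨a, at', rfl⟩ := List.exists_cons_of_ne_nil hA
    simp
  · rcases eq_or_ne bt [] with rfl | hbt
    · simp [hlink']
    · rw [show (b :: bt).tail = bt from rfl, List.getLast?_append_of_ne_nil _ hbt,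
        show b :: bt = [b] ++ bt by simp, List.getLast?_append_of_ne_nil _ hbt]

lemma head?_append_cons (p : List V) (z : V) (xs ys : List V) :
    (p ++ z :: xs).head? = (p ++ z :: ys).head? := by
  cases p <;> simp

lemma head?_append_left (A B : List V) (h : A ≠ []) : (A ++ B).head? = A.head? := by
  cases A with
  | nil => exact absurd rfl h
  | cons a t => simp

/-- Menger base case: no arcs. -/
lemma no_arc [Fintype V] (r : V → V → Prop) (hr : ∀ a b, ¬ r a b) (S T : Set V) (k : ℕ)
    (h : ∀ X : Finset V, Sep r S T X → k ≤ X.card) :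
    ∃ f : Fin k → List V, (∀ i, PathB r S T (f i)) ∧
      ∀ i j, i ≠ j → ∀ x, x ∈ f i → x ∉ f j := by
  classical
  set X₀ : Finset V := (Set.toFinite (S ∩ T)).toFinset with hX₀
  have hsep : Sep r S T X₀ := by
    intro l hc hnd ⟨a, haS, hha⟩ ⟨b, hbT, hlb⟩
    match l with
    | [] => simp at hha
    | [c] =>
      simp only [List.head?_cons, Option.some.injEq] at hha
      have hlb' : c = b := by simpa using hlb
      refine ⟨c, ?_, by simp⟩
      rw [hX₀, Set.Finite.mem_toFinset]
      exact ⟨by rw [hha]; exact haS, by rw [hlb']; exact hbT⟩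
    | c :: d :: t =>
      exact absurd (List.isChain_cons_cons.1 hc).1 (hr c d)
  have hk : k ≤ X₀.card := h X₀ hsep
  obtain ⟨Y, hYsub, hYcard⟩ := Finset.exists_subset_card_eq hk
  let eqv := Y.equivFinOfCardEq hYcard
  refine ⟨fun i => [(eqv.symm i : V)], fun i => ?_, fun i j hij x hxi hxj => ?_⟩
  · have hmem : ((eqv.symm i : V)) ∈ X₀ := hYsub (eqv.symm i).2
    rw [hX₀, Set.Finite.mem_toFinset] at hmem
    exact ⟨by simp [List.Chain'], by simp, ⟨_, hmem.1, by simp⟩, ⟨_, hmem.2, by simp⟩⟩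
  · simp only [List.mem_singleton] at hxi hxj
    subst hxi
    apply hij
    have : eqv.symm i = eqv.symm j := Subtype.ext hxj
    simpa using congrArg eqv this

/-- Menger's theorem for digraphs (relations), list-path version. -/
theorem menger_rel [Fintype V] (n : ℕ) :
    ∀ (r : V → V → Prop), ({p : V × V | r p.1 p.2}.ncard ≤ n) →
      ∀ (S T : Set V) (k : ℕ),
      (∀ X : Finset V, Sep r S T X → k ≤ X.card) →
      ∃ f : Fin k → List V, (∀ i, PathB r S T (f i)) ∧
        ∀ i j, i ≠ j → ∀ x, x ∈ f i → x ∉ f j := by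
  classical
  induction n with
  | zero =>
    intro r hn S T k h
    refine no_arc r (fun a b hab => ?_) S T k h
    have : (a, b) ∈ {p : V × V | r p.1 p.2} := hab
    have hne : {p : V × V | r p.1 p.2}.Nonempty := ⟨_, this⟩
    have := Set.ncard_pos (Set.toFinite _) |>.2 hne
    omega
  | succ n ih =>
    intro r hn S T k h
    by_cases harc : ∀ a b, ¬ r a b
    · exact no_arc r harc S T k h
    · push_neg at harc
      obtain ⟨u, v, huv⟩ := harc
      set r' : V → V → Prop := del r u v with hr'
      have harcs' : {p : V × V | r' p.1 p.2}.ncard ≤ n := by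
        have hsub : {p : V × V | r' p.1 p.2} ⊆ {p : V × V | r p.1 p.2} \ {(u, v)} := by
          rintro ⟨a, b⟩ hab
          refine ⟨hab.1, ?_⟩
          simp only [Set.mem_singleton_iff, Prod.mk.injEq]
          intro hh
          exact hab.2 hh
        have h1 := Set.ncard_le_ncard hsub (Set.toFinite _)
        have h2 := Set.ncard_diff_singleton_lt_of_mem (show (u,v) ∈ {p : V × V | r p.1 p.2} from huv) (Set.toFinite _)
        omega
      by_cases hsep : ∀ X : Finset V, Sep r' S T X → k ≤ X.card
      · obtain ⟨f, hf, hdisj⟩ := ih r' harcs' S T k hsep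
        exact ⟨f, fun i => ⟨(hf i).1.imp fun a b => del_le, (hf i).2⟩, hdisj⟩
      · push_neg at hsep
        obtain ⟨X, hX, hXk⟩ := hsep
        rcases eq_or_ne u v with rfl | huvne
        · exfalso
          have : Sep r S T X := by
            intro l hc hnd hh hl
            rcases chain'_del_or (u := u) (v := u) l hc with hcd | ⟨l₁, l₂, rfl⟩
            · exact hX l hcd hnd hh hl
            · exfalso
              have := (List.nodup_append.1 hnd).2.1
              simp at this
          exact absurd (h X this) (by omega)
        -- u ≠ v
        have huX : u ∉ X := by
          intro huX
          have : Sep r S T X := by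
            intro l hc hnd hh hl
            rcases chain'_del_or (u := u) (v := v) l hc with hcd | ⟨l₁, l₂, rfl⟩
            · exact hX l hcd hnd hh hl
            · exact ⟨u, huX, by simp⟩
          exact absurd (h X this) (by omega)
        have hvX : v ∉ X := by
          intro hvX
          have : Sep r S T X := by
            intro l hc hnd hh hl
            rcases chain'_del_or (u := u) (v := v) l hc with hcd | ⟨l₁, l₂, rfl⟩
            · exact hX l hcd hnd hh hl
            · exact ⟨v, hvX, by simp⟩
          exact absurd (h X this) (by omega)
        set W : Finset V := insert u X with hW
        set W' : Finset V := insert v X with hW'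
        have hsu : Sep r S T W := by
          intro l hc hnd hh hl
          rcases chain'_del_or (u := u) (v := v) l hc with hcd | ⟨l₁, l₂, rfl⟩
          · obtain ⟨x, hx, hxl⟩ := hX l hcd hnd hh hl
            exact ⟨x, by simp [hW, hx], hxl⟩
          · exact ⟨u, by simp [hW], by simp⟩
        have hWcard : W.card = X.card + 1 := Finset.card_insert_of_notMem huX
        have hW'card : W'.card = X.card + 1 := Finset.card_insert_of_notMem hvX
        have hkX : k = X.card + 1 := le_antisymm (by have := h W hsu; omega) (by omega)
        -- every S–W separator of r' is large
        have hu : ∀ Q : Finset V, Sep r' S (↑W) Q → k ≤ Q.card := by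
          intro Q hQ
          apply h
          intro l hc hnd ⟨a, haS, hha⟩ ⟨b, hbT, hlb⟩
          rcases chain'_del_or (u := u) (v := v) l hc with hcd | ⟨l₁, l₂, rfl⟩
          · obtain ⟨x, hx, hxl⟩ := hX l hcd hnd ⟨a, haS, hha⟩ ⟨b, hbT, hlb⟩
            obtain ⟨s, t, rfl⟩ := List.append_of_mem hxl
            have hpre : s ++ [x] <+: s ++ x :: t := ⟨t, by simp⟩
            obtain ⟨q, hqQ, hql⟩ := hQ (s ++ [x]) (hcd.prefix hpre)
              (hpre.sublist.nodup hnd)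
              ⟨a, haS, by rw [head?_append_cons s x [] t]; exact hha⟩
              ⟨x, by simp [hW, hx], by rw [List.getLast?_append_cons]; simp⟩
            exact ⟨q, hqQ, hpre.subset hql⟩
          · have hpre : l₁ ++ [u] <+: l₁ ++ u :: v :: l₂ := ⟨v :: l₂, by simp⟩
            have hchain : (l₁ ++ [u]).Chain' r := hc.prefix hpre
            have hnodup : (l₁ ++ [u]).Nodup := hpre.sublist.nodup hnd
            have hlast : (l₁ ++ [u]).getLast? = some u := by
              rw [List.getLast?_append_cons]; simp
            obtain ⟨q, hqQ, hql⟩ := hQ (l₁ ++ [u])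
              (chain'_del_of_getLast_u hchain hnodup hlast) hnodup
              ⟨a, haS, by rw [head?_append_cons l₁ u [] (v :: l₂)]; exact hha⟩
              ⟨u, by simp [hW], hlast⟩
            exact ⟨q, hqQ, hpre.subset hql⟩
        -- every W'–T separator of r' is large
        have hv : ∀ Q : Finset V, Sep r' (↑W') T Q → k ≤ Q.card := by
          intro Q hQ
          apply h
          intro l hc hnd ⟨a, haS, hha⟩ ⟨b, hbT, hlb⟩
          rcases chain'_del_or (u := u) (v := v) l hc with hcd | ⟨l₁, l₂, rfl⟩
          · obtain ⟨x, hx, hxl⟩ := hX l hcd hnd ⟨a, haS, hha⟩ ⟨b, hbT, hlb⟩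
            obtain ⟨s, t, rfl⟩ := List.append_of_mem hxl
            have hsuf : x :: t <:+ s ++ x :: t := ⟨s, rfl⟩
            obtain ⟨q, hqQ, hql⟩ := hQ (x :: t) (hcd.suffix hsuf)
              (hsuf.sublist.nodup hnd)
              ⟨x, by simp [hW', hx], by simp⟩
              ⟨b, hbT, by rw [← List.getLast?_append_cons s x t]; exact hlb⟩
            exact ⟨q, hqQ, hsuf.subset hql⟩
          · have hsuf : v :: l₂ <:+ l₁ ++ u :: v :: l₂ := ⟨l₁ ++ [u], by simp⟩
            have hchain : (v :: l₂).Chain' r := hc.suffix hsuf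
            have hnodup : (v :: l₂).Nodup := hsuf.sublist.nodup hnd
            have h5 : (l₁ ++ u :: v :: l₂).getLast? = (v :: l₂).getLast? := by
              rw [List.getLast?_append_cons l₁ u (v :: l₂)]
              exact List.getLast?_append_cons [u] v l₂
            have hlast : (v :: l₂).getLast? = some b := by rw [← h5]; exact hlb
            obtain ⟨q, hqQ, hql⟩ := hQ (v :: l₂)
              (chain'_del_of_head_v huvne hchain hnodup (by simp)) hnodup
              ⟨v, by simp [hW'], by simp⟩
              ⟨b, hbT, hlast⟩
            exact ⟨q, hqQ, hsuf.subset hql⟩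
        obtain ⟨fP, hfP, hfPdisj⟩ := ih r' harcs' S (↑W) k hu
        obtain ⟨fQ, hfQ, hfQdisj⟩ := ih r' harcs' (↑W') T k hv
        set PP : Fin k → List V := fun i => pu W (fP i) with hPP
        set QQ : Fin k → List V := fun j => su W' (fQ j) with hQQ
        have hPPpre : ∀ i, PP i <+: fP i := fun i => pu_prefix W (fP i)
        have hQQsuf : ∀ j, QQ j <:+ fQ j := fun j => su_suffix W' (fQ j)
        have hPPc : ∀ i, (PP i).Chain' r' := fun i => (hfP i).1.prefix (hPPpre i)
        have hQQc : ∀ j, (QQ j).Chain' r' := fun j => (hfQ j).1.suffix (hQQsuf j)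
        have hPPnd : ∀ i, (PP i).Nodup := fun i => ((hPPpre i).sublist).nodup (hfP i).2.1
        have hQQnd : ∀ j, (QQ j).Nodup := fun j => ((hQQsuf j).sublist).nodup (hfQ j).2.1
        have hPPhead : ∀ i, (PP i).head? = (fP i).head? := fun i => pu_head? W (fP i)
        have hQQlast : ∀ j, (QQ j).getLast? = (fQ j).getLast? := fun j => su_getLast? W' (fQ j)
        have hPPsub : ∀ i, PP i ⊆ fP i := fun i => (hPPpre i).subset
        have hQQsub : ∀ j, QQ j ⊆ fQ j := fun j => (hQQsuf j).subset
        have hPPlast : ∀ i, ∃ w ∈ W, (PP i).getLast? = some w := by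
          intro i
          apply pu_last_mem
          obtain ⟨b, hbW, hb⟩ := (hfP i).2.2.2
          exact ⟨b, mem_of_getLast? hb, by exact_mod_cast hbW⟩
        choose e heW heL using hPPlast
        have hQQhead : ∀ j, ∃ w ∈ W', (QQ j).head? = some w := by
          intro j
          apply su_head_mem
          obtain ⟨a, haW, ha⟩ := (hfQ j).2.2.1
          exact ⟨a, List.mem_of_mem_head? (by rw [ha]; rfl), by exact_mod_cast haW⟩
        choose f' hf'W hf'h using hQQhead
        have heMem : ∀ i, e i ∈ PP i := fun i => mem_of_getLast? (heL i)
        have hf'Mem : ∀ j, f' j ∈ QQ j := fun j => List.mem_of_mem_head? (by rw [hf'h j]; rfl)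
        have hPne : ∀ i, PP i ≠ [] := by
          intro i he; have := heL i; rw [he] at this; simp at this
        have hQne : ∀ j, QQ j ≠ [] := by
          intro j he; have := hf'h j; rw [he] at this; simp at this
        have heInj : Function.Injective e := by
          intro i j hij
          by_contra hne
          exact hfPdisj i j hne (e i) (hPPsub i (heMem i))
            (by rw [hij]; exact hPPsub j (heMem j))
        have hf'Inj : Function.Injective f' := by
          intro i j hij
          by_contra hne
          exact hfQdisj i j hne (f' i) (hQQsub i (hf'Mem i))
            (by rw [hij]; exact hQQsub j (hf'Mem j))
        have heSurj : ∀ w ∈ W, ∃ i, e i = w := by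
          have himg : Finset.univ.image e = W := by
            apply Finset.eq_of_subset_of_card_le
            · intro w hw
              obtain ⟨i, -, rfl⟩ := Finset.mem_image.1 hw
              exact heW i
            · rw [Finset.card_image_of_injective _ heInj, Finset.card_univ, Fintype.card_fin]
              omega
          intro w hw
          rw [← himg] at hw
          obtain ⟨i, -, hi⟩ := Finset.mem_image.1 hw
          exact ⟨i, hi⟩
        have hf'Surj : ∀ w ∈ W', ∃ j, f' j = w := by
          have himg : Finset.univ.image f' = W' := by
            apply Finset.eq_of_subset_of_card_le
            · intro w hw
              obtain ⟨j, -, rfl⟩ := Finset.mem_image.1 hw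
              exact hf'W j
            · rw [Finset.card_image_of_injective _ hf'Inj, Finset.card_univ, Fintype.card_fin]
              omega
          intro w hw
          rw [← himg] at hw
          obtain ⟨j, -, hj⟩ := Finset.mem_image.1 hw
          exact ⟨j, hj⟩
        have heX : ∀ i, e i ≠ u → e i ∈ X := by
          intro i hne
          have := heW i
          rw [hW, Finset.mem_insert] at this
          rcases this with h' | h'
          · exact absurd h' hne
          · exact h'
        have hf'X : ∀ j, f' j ≠ v → f' j ∈ X := by
          intro j hne
          have := hf'W j
          rw [hW', Finset.mem_insert] at this
          rcases this with h' | h'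
          · exact absurd h' hne
          · exact h'
        -- key disjointness claim
        have hkey : ∀ i j z, z ∈ PP i → z ∈ QQ j →
            z ∈ X ∧ (PP i).getLast? = some z ∧ (QQ j).head? = some z := by
          intro i j z hzP hzQ
          obtain ⟨p₁, p₂, hPeq⟩ := List.append_of_mem hzP
          obtain ⟨q₁, q₂, hQeq⟩ := List.append_of_mem hzQ
          have hPc := List.isChain_append.1 (show (p₁ ++ z :: p₂).Chain' r' by rw [← hPeq]; exact hPPc i)
          have hQc : (z :: q₂).Chain' r' := (hQQc j).suffix ⟨q₁, hQeq.symm⟩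
          have hCc : (p₁ ++ z :: q₂).Chain' r' := by
            refine List.isChain_append.2 ⟨hPc.1, hQc, ?_⟩
            intro x hx y hy
            simp only [List.head?_cons, Option.mem_def, Option.some.injEq] at hy
            subst hy
            exact hPc.2.2 x hx z (by simp)
          have hheadC : (p₁ ++ z :: q₂).head? = (fP i).head? := by
            rw [← hPPhead i, hPeq]
            exact head?_append_cons p₁ z q₂ p₂
          have hlastC : (p₁ ++ z :: q₂).getLast? = (fQ j).getLast? := by
            rw [← hQQlast j, hQeq, List.getLast?_append_cons, List.getLast?_append_cons]
          obtain ⟨a, haS, hha⟩ := (hfP i).2.2.1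
          obtain ⟨b, hbT, hlb⟩ := (hfQ j).2.2.2
          obtain ⟨x, hxX, hxC⟩ := Sep.walk hX hCc ⟨a, haS, by rw [hheadC]; exact hha⟩
            ⟨b, hbT, by rw [hlastC]; exact hlb⟩
          rcases List.mem_append.1 hxC with hx1 | hx2
          · exfalso
            have hxPP : x ∈ PP i := by rw [hPeq]; exact List.mem_append.2 (Or.inl hx1)
            have hxW : x ∈ W := by rw [hW]; exact Finset.mem_insert_of_mem hxX
            have hlx := pu_mem_W W (fP i) x hxPP hxW
            have hlx' : (p₁ ++ z :: p₂).getLast? = some x := by rw [← hPeq]; exact hlx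
            rw [List.getLast?_append_cons] at hlx'
            have hxz : x ∈ z :: p₂ := mem_of_getLast? hlx'
            have hnd : (p₁ ++ z :: p₂).Nodup := by rw [← hPeq]; exact hPPnd i
            exact (List.nodup_append.1 hnd).2.2 x hx1 x hxz rfl
          · have hxQQ : x ∈ QQ j := by rw [hQeq]; exact List.mem_append.2 (Or.inr hx2)
            have hxW' : x ∈ W' := by rw [hW']; exact Finset.mem_insert_of_mem hxX
            have hhx : (QQ j).head? = some x := su_mem_W W' (fQ j) x hxQQ hxW'
            have hxz : x = z := by
              cases q₁ with
              | nil =>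
                rw [hQeq] at hhx
                simp only [List.nil_append, List.head?_cons, Option.some.injEq] at hhx
                exact hhx.symm
              | cons c q₁' =>
                exfalso
                have hhx' : (c :: (q₁' ++ z :: q₂)).head? = some x := by
                  rw [← List.cons_append, ← hQeq]; exact hhx
                simp only [List.head?_cons, Option.some.injEq] at hhx'
                have hnd : ((c :: q₁') ++ z :: q₂).Nodup := by rw [← hQeq]; exact hQQnd j
                exact (List.nodup_append.1 hnd).2.2 x (by rw [hhx']; exact List.mem_cons_self) x hx2 rfl
            subst hxz
            refine ⟨hxX, ?_, hhx⟩
            exact pu_mem_W W (fP i) x hzP (by rw [hW]; exact Finset.mem_insert_of_mem hxX)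
        -- choose the partner path
        have htW' : ∀ i, (if e i = u then v else e i) ∈ W' := by
          intro i
          by_cases hei : e i = u
          · rw [if_pos hei, hW']; exact Finset.mem_insert_self v X
          · rw [if_neg hei, hW']; exact Finset.mem_insert_of_mem (heX i hei)
        choose ρ hρf using fun i => hf'Surj _ (htW' i)
        have hρInj : Function.Injective ρ := by
          intro i i' hii
          apply heInj
          have h1 := hρf i
          rw [hii, hρf i'] at h1
          by_cases ha : e i = u <;> by_cases hb : e i' = u
          · rw [ha, hb]
          · rw [if_pos ha, if_neg hb] at h1
            exact absurd (h1 ▸ heX i' hb) hvX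
          · rw [if_neg ha, if_pos hb] at h1
            exact absurd (h1.symm ▸ heX i ha) hvX
          · rw [if_neg ha, if_neg hb] at h1
            exact h1.symm
        refine ⟨fun i => if e i = u then PP i ++ QQ (ρ i) else PP i ++ (QQ (ρ i)).tail,
          fun i => ?_, ?_⟩
        · by_cases hei : e i = u
          · simp only [if_pos hei]
            have hfρ : f' (ρ i) = v := by rw [hρf i, if_pos hei]
            refine ⟨?_, ?_, ?_, ?_⟩
            · refine List.isChain_append.2 ⟨(hPPc i).imp fun a b => del_le, (hQQc (ρ i)).imp fun a b => del_le, ?_⟩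
              intro x hx y hy
              rw [Option.mem_def, heL i, hei] at hx
              rw [Option.mem_def, hf'h (ρ i), hfρ] at hy
              obtain rfl : u = x := by injection hx
              obtain rfl : v = y := by injection hy
              exact huv
            · rw [List.nodup_append]
              refine ⟨hPPnd i, hQQnd (ρ i), fun z hz1 z' hz2 hzz => ?_⟩
              subst hzz
              obtain ⟨hzX, hzL, -⟩ := hkey i (ρ i) z hz1 hz2
              rw [heL i, hei] at hzL
              obtain rfl : u = z := by injection hzL
              exact huX hzX
            · obtain ⟨a, haS, hha⟩ := (hfP i).2.2.1
              exact ⟨a, haS, by rw [head?_append_left _ _ (hPne i), hPPhead i]; exact hha⟩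
            · obtain ⟨b, hbT, hlb⟩ := (hfQ (ρ i)).2.2.2
              exact ⟨b, hbT, by rw [List.getLast?_append_of_ne_nil _ (hQne (ρ i)), hQQlast (ρ i)]; exact hlb⟩
          · simp only [if_neg hei]
            have hfρ : f' (ρ i) = e i := by rw [hρf i, if_neg hei]
            have hlink : (PP i).getLast? = (QQ (ρ i)).head? := by
              rw [heL i, hf'h (ρ i), hfρ]
            obtain ⟨hgc, hgnd, hgh, hgl⟩ := glue_path (hPne i) (hQne (ρ i)) (hPPc i)
              (hQQc (ρ i)) (hPPnd i) (hQQnd (ρ i)) hlink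
              (fun z hz1 hz2 => (hkey i (ρ i) z hz1 hz2).2.2)
            refine ⟨hgc.imp fun a b => del_le, hgnd, ?_, ?_⟩
            · obtain ⟨a, haS, hha⟩ := (hfP i).2.2.1
              exact ⟨a, haS, by rw [hgh, hPPhead i]; exact hha⟩
            · obtain ⟨b, hbT, hlb⟩ := (hfQ (ρ i)).2.2.2
              exact ⟨b, hbT, by rw [hgl, hQQlast (ρ i)]; exact hlb⟩
        · intro i i' hii x hxi hxi'
          have hsup : ∀ j y, y ∈ (if e j = u then PP j ++ QQ (ρ j) else PP j ++ (QQ (ρ j)).tail) →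
              y ∈ PP j ∨ y ∈ QQ (ρ j) := by
            intro j y hy
            by_cases hej : e j = u
            · rw [if_pos hej] at hy
              exact List.mem_append.1 hy
            · rw [if_neg hej] at hy
              rcases List.mem_append.1 hy with h' | h'
              · exact Or.inl h'
              · exact Or.inr (List.mem_of_mem_tail h')
          rcases hsup i x hxi with h1 | h1 <;> rcases hsup i' x hxi' with h2 | h2
          · exact hfPdisj i i' hii x (hPPsub i h1) (hPPsub i' h2)
          · obtain ⟨hxX, hL, hH⟩ := hkey i (ρ i') x h1 h2
            rw [heL i] at hL
            obtain rfl : e i = x := by injection hL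
            rw [hf'h (ρ i')] at hH
            have hfx : f' (ρ i') = e i := by injection hH
            rw [hρf i'] at hfx
            by_cases hb : e i' = u
            · rw [if_pos hb] at hfx
              exact hvX (hfx ▸ hxX)
            · rw [if_neg hb] at hfx
              exact hii (heInj hfx.symm)
          · obtain ⟨hxX, hL, hH⟩ := hkey i' (ρ i) x h2 h1
            rw [heL i'] at hL
            obtain rfl : e i' = x := by injection hL
            rw [hf'h (ρ i)] at hH
            have hfx : f' (ρ i) = e i' := by injection hH
            rw [hρf i] at hfx
            by_cases ha : e i = u
            · rw [if_pos ha] at hfx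
              exact hvX (hfx ▸ hxX)
            · rw [if_neg ha] at hfx
              exact hii (heInj hfx)
          · exact hfQdisj (ρ i) (ρ i') (fun hh => hii (hρInj hh)) x (hQQsub _ h1) (hQQsub _ h2)

section walk
variable (G : SimpleGraph V)

/-- Build a walk from a chain of adjacent vertices. -/
def toWalk : ∀ (l : List V), l.Chain' G.Adj → (h : l ≠ []) → G.Walk (l.head h) (l.getLast h)
  | [], _, h => absurd rfl h
  | [_], _, _ => SimpleGraph.Walk.nil
  | a :: b :: t, hc, _ =>
    (SimpleGraph.Walk.cons (List.isChain_cons_cons.1 hc).1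
      (toWalk (b :: t) (List.isChain_cons_cons.1 hc).2 (by simp))).copy rfl
      (by rw [List.getLast_cons (by simp : (b :: t) ≠ [])])

lemma toWalk_support : ∀ (l : List V) (hc : l.Chain' G.Adj) (h : l ≠ []),
    (toWalk G l hc h).support = l
  | [], _, h => absurd rfl h
  | [_], _, _ => by simp [toWalk]
  | a :: b :: t, hc, _ => by
    have := toWalk_support (b :: t) (List.isChain_cons_cons.1 hc).2 (by simp)
    simp only [toWalk, SimpleGraph.Walk.support_copy]
    exact congrArg (List.cons a) this

end walk
end MengerAux

/-- Menger's theorem: either there are `k+1` pairwise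
vertex-disjoint `S`–`T` paths, or a set `X` of at most `k` vertices meets
every `S`–`T` path. -/
theorem stmt3 {V : Type*} [Fintype V] [DecidableEq V] (G : SimpleGraph V)
    (S T : Set V) (k : ℕ) :
    (∃ (u v : Fin (k + 1) → V) (p : ∀ i, G.Walk (u i) (v i)),
      (∀ i, (p i).IsPath ∧ u i ∈ S ∧ v i ∈ T) ∧
      (∀ i j, i ≠ j → ∀ x, x ∈ (p i).support → x ∉ (p j).support)) ∨
    (∃ X : Finset V, X.card ≤ k ∧
      ∀ (a b : V) (q : G.Walk a b), q.IsPath → a ∈ S → b ∈ T →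
        ∃ x ∈ X, x ∈ q.support) := by
  classical
  by_cases hsep : ∃ X : Finset V, X.card ≤ k ∧ MengerAux.Sep G.Adj S T X
  · obtain ⟨X, hXc, hX⟩ := hsep
    refine Or.inr ⟨X, hXc, fun a b q hq ha hb => ?_⟩
    refine hX q.support q.isChain_adj_support hq.support_nodup ⟨a, ha, ?_⟩ ⟨b, hb, ?_⟩
    · rw [q.support_eq_cons]; rfl
    · rw [List.getLast?_eq_getLast_of_ne_nil (by simp), SimpleGraph.Walk.getLast_support]
  · left
    push_neg at hsep
    have hsep' : ∀ X : Finset V, MengerAux.Sep G.Adj S T X → k + 1 ≤ X.card := by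
      intro X hX
      by_contra hc
      exact absurd hX (hsep X (by omega))
    obtain ⟨f, hf, hdisj⟩ := MengerAux.menger_rel ({p : V × V | G.Adj p.1 p.2}.ncard)
      G.Adj le_rfl S T (k + 1) hsep'
    have hne : ∀ i, f i ≠ [] := by
      intro i he
      obtain ⟨a, -, ha⟩ := (hf i).2.2.1
      rw [he] at ha; simp at ha
    refine ⟨fun i => (f i).head (hne i), fun i => (f i).getLast (hne i),
      fun i => MengerAux.toWalk G (f i) (hf i).1 (hne i), fun i => ?_, fun i j hij x hxi hxj => ?_⟩
    · refine ⟨?_, ?_, ?_⟩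
      · rw [SimpleGraph.Walk.isPath_def, MengerAux.toWalk_support]
        exact (hf i).2.1
      · obtain ⟨a, haS, ha⟩ := (hf i).2.2.1
        have he : (f i).head (hne i) = a := by
          rw [List.head?_eq_head (hne i)] at ha; injection ha
        show (f i).head (hne i) ∈ S
        rw [he]; exact haS
      · obtain ⟨b, hbT, hb⟩ := (hf i).2.2.2
        have he : (f i).getLast (hne i) = b := by
          rw [List.getLast?_eq_getLast_of_ne_nil (hne i)] at hb; injection hb
        show (f i).getLast (hne i) ∈ T
        rw [he]; exact hbT
    · rw [MengerAux.toWalk_support] at hxi hxj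
      exact hdisj i j hij x hxi hxj
end

section
/- Let G be a finite simple graph, S, T ⊆ V(G), and c, k ≥ 0. Suppose there do not exist k+1 S–T paths that are pairwise at distance more than c in G. If we contract any set F of edges of G to obtain G', S', T', then there do not exist k+1 S'–T' paths in G' that are pairwise vertex-disjoint and whose pre-images in G (unions of the uncontracted path edges with the subgraphs η(v)) are pairwise at distance more than c. -/
open SimpleGraph

/-- The spanning subgraph of `G` with edge set `F` (as a simple graph). -/
def contractGraphH {V : Type*} (G : SimpleGraph V) (F : Set (Sym2 V)) : SimpleGraph V :=
  SimpleGraph.fromEdgeSet (F ∩ G.edgeSet)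

/-- The contraction `G/F`. -/
def contractGraph {V : Type*} (G : SimpleGraph V) (F : Set (Sym2 V)) :
    SimpleGraph (contractGraphH G F).ConnectedComponent where
  Adj x y := x ≠ y ∧ ∃ a b : V, G.Adj a b ∧
      (contractGraphH G F).connectedComponentMk a = x ∧
      (contractGraphH G F).connectedComponentMk b = y
  symm := by
    constructor
    rintro x y ⟨hxy, a, b, hab, ha, hb⟩
    exact ⟨hxy.symm, b, a, hab.symm, hb, ha⟩
  loopless := by
    constructor
    rintro x ⟨hxx, -⟩
    exact hxx rfl

/-- The pre-image in `G` of a walk `p` of `G/F`. -/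
def preimageSubgraph {V : Type*} (G : SimpleGraph V) (F : Set (Sym2 V))
    {x y : (contractGraphH G F).ConnectedComponent}
    (p : (contractGraph G F).Walk x y) : G.Subgraph where
  verts := {a | (contractGraphH G F).connectedComponentMk a ∈ p.support}
  Adj a b := (contractGraphH G F).connectedComponentMk a ∈ p.support ∧
      (contractGraphH G F).connectedComponentMk b ∈ p.support ∧
      ((contractGraphH G F).Adj a b ∨ (G.Adj a b ∧
        s((contractGraphH G F).connectedComponentMk a,
          (contractGraphH G F).connectedComponentMk b) ∈ p.edges))
  adj_sub := by
    rintro a b ⟨-, -, h | ⟨h, -⟩⟩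
    · simp only [contractGraphH, SimpleGraph.fromEdgeSet_adj, Set.mem_inter_iff,
        SimpleGraph.mem_edgeSet] at h
      exact h.1.2
    · exact h
  edge_vert := by
    rintro a b ⟨ha, -, -⟩
    exact ha
  symm := by
    constructor
    rintro a b ⟨ha, hb, h⟩
    refine ⟨hb, ha, ?_⟩
    rcases h with h | ⟨h, he⟩
    · exact Or.inl h.symm
    · exact Or.inr ⟨h.symm, by rwa [Sym2.eq_swap]⟩

lemma contractGraphH_le {V : Type*} (G : SimpleGraph V) (F : Set (Sym2 V)) :
    contractGraphH G F ≤ G := by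
  intro a b h
  simp only [contractGraphH, SimpleGraph.fromEdgeSet_adj, Set.mem_inter_iff,
    SimpleGraph.mem_edgeSet] at h
  exact h.1.2

lemma same_comp_walk {V : Type*} (G : SimpleGraph V) (F : Set (Sym2 V)) (a b : V)
    (h : (contractGraphH G F).connectedComponentMk a
      = (contractGraphH G F).connectedComponentMk b) :
    ∃ q : G.Walk a b, ∀ v ∈ q.support,
      (contractGraphH G F).connectedComponentMk v
        = (contractGraphH G F).connectedComponentMk a := by
  classical
  obtain ⟨w⟩ := SimpleGraph.ConnectedComponent.exact h
  refine ⟨w.mapLe (contractGraphH_le G F), ?_⟩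
  intro v hv
  have hv' : v ∈ w.support := by
    rw [SimpleGraph.Walk.mapLe, SimpleGraph.Walk.support_map] at hv
    simpa using hv
  exact (SimpleGraph.ConnectedComponent.sound ((w.takeUntil v hv').reachable)).symm

lemma key_lemma {V : Type*} (G : SimpleGraph V) (F : Set (Sym2 V)) :
    ∀ {x y : (contractGraphH G F).ConnectedComponent}
      (p : (contractGraph G F).Walk x y) (a b : V),
      (contractGraphH G F).connectedComponentMk a = x →
      (contractGraphH G F).connectedComponentMk b ∈ p.support →
      ∃ q : G.Walk a b, ∀ v ∈ q.support,
        (contractGraphH G F).connectedComponentMk v ∈ p.support := by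
  intro x y p
  induction p with
  | nil =>
    intro a b ha hb
    simp only [SimpleGraph.Walk.support_nil, List.mem_singleton] at hb
    obtain ⟨q, hq⟩ := same_comp_walk G F a b (by rw [ha, hb])
    exact ⟨q, fun v hv => by simp [hq v hv, ha]⟩
  | cons h p ih =>
    rename_i x x' y
    intro a b ha hb
    simp only [SimpleGraph.Walk.support_cons, List.mem_cons] at hb
    rcases hb with hb | hb
    · obtain ⟨q, hq⟩ := same_comp_walk G F a b (by rw [ha, hb])
      exact ⟨q, fun v hv => by simp [hq v hv, ha]⟩
    · obtain ⟨hne, a', b', hab, ha', hb'⟩ := h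
      obtain ⟨q₁, hq₁⟩ := same_comp_walk G F a a' (by rw [ha, ha'])
      obtain ⟨q₂, hq₂⟩ := ih b' b hb' hb
      refine ⟨q₁.append (SimpleGraph.Walk.cons hab q₂), ?_⟩
      intro v hv
      rw [SimpleGraph.Walk.support_append, List.mem_append] at hv
      rcases hv with hv | hv
      · simp [hq₁ v hv, ha]
      · rw [SimpleGraph.Walk.support_cons, List.tail_cons] at hv
        exact List.mem_cons_of_mem _ (hq₂ v hv)

/-- if `G` has no `k+1` pairwise more-than-`c`-distant `S`–`T`
paths, then after contracting any edge set `F` there are no `k+1` pairwise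
vertex-disjoint `S'`–`T'` paths of `G/F` whose pre-images in `G` are pairwise
at distance more than `c`. -/
theorem stmt11 {V : Type*} [Fintype V] [DecidableEq V] (G : SimpleGraph V)
    (F : Set (Sym2 V)) (S T : Set V) (c k : ℕ)
    (hno : ¬ ∃ (u w : Fin (k + 1) → V) (p : ∀ i, G.Walk (u i) (w i)),
      (∀ i, (p i).IsPath ∧ u i ∈ S ∧ w i ∈ T) ∧
      (∀ i j, i ≠ j → ∀ a ∈ (p i).support, ∀ b ∈ (p j).support,
        ∀ q : G.Walk a b, c < q.length)) :
    ¬ ∃ (x y : Fin (k + 1) → (contractGraphH G F).ConnectedComponent)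
        (p : ∀ i, (contractGraph G F).Walk (x i) (y i)),
      (∀ i, (p i).IsPath ∧
        (∃ a ∈ S, (contractGraphH G F).connectedComponentMk a = x i) ∧
        (∃ b ∈ T, (contractGraphH G F).connectedComponentMk b = y i)) ∧
      (∀ i j, i ≠ j → ∀ z, z ∈ (p i).support → z ∉ (p j).support) ∧
      (∀ i j, i ≠ j → ∀ a ∈ (preimageSubgraph G F (p i)).verts,
        ∀ b ∈ (preimageSubgraph G F (p j)).verts,
        ∀ q : G.Walk a b, c < q.length) := by

  intro ⟨x, y, p, hpath, hdisj, hfar⟩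
  apply hno
  have hsel : ∀ i, ∃ (a b : V) (q : G.Walk a b), a ∈ S ∧ b ∈ T ∧
      ∀ v ∈ q.support, (contractGraphH G F).connectedComponentMk v ∈ (p i).support := by
    intro i
    obtain ⟨-, ⟨a, haS, ha⟩, ⟨b, hbT, hb⟩⟩ := hpath i
    obtain ⟨q, hq⟩ := key_lemma G F (p i) a b ha
      (by rw [hb]; exact (p i).end_mem_support)
    exact ⟨a, b, q, haS, hbT, hq⟩
  choose u w q hS hT hsupp using hsel
  refine ⟨u, w, fun i => (q i).toPath, fun i => ⟨(q i).toPath.2, hS i, hT i⟩, ?_⟩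
  intro i j hij a haa b hbb r
  exact hfar i j hij a (hsupp i a ((q i).support_toPath_subset haa))
    b (hsupp j b ((q j).support_toPath_subset hbb)) r
end
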